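/- arXiv:2510.10202 — 5 statements merged into one kernel-verified Lean document; each statement's English description precedes it below -/
import Mathlib

section
/- Suppose φ₀ : (Fin n → ℝ) → ℝ is differentiable and satisfies the steady-state HJB equation with state cost m₀, i.e. for all x: ∇φ₀(x) ⬝ᵥ f(x) − (1/4)·((g x)ᵀ.mulVec (∇φ₀ x)) ⬝ᵥ (R⁻¹.mulVec ((g x)ᵀ.mulVec (∇φ₀ x))) + m₀(x) = 0, and suppose h : (Fin n → ℝ) → ℝ is differentiable and satisfies, for all x, the linear PDE ∇h(x) ⬝ᵥ (f(x) − (1/2)·(g x).mulVec (R⁻¹.mulVec ((g x)ᵀ.mulVec (∇φ₀ x)))) = −m̄(x). Then φ_p := φ₀ + h satisfies, for all x: ∇φ_p(x) ⬝ᵥ f(x) − (1/4)·((g x)ᵀ.mulVec (∇φ_p x)) ⬝ᵥ (R⁻¹.mulVec ((g x)ᵀ.mulVec (∇φ_p x))) = −( m₀(x) + m̄(x) + (1/4)·‖R⁻¹.mulVec ((g x)ᵀ.mulVec (∇h x))‖²_R ). That is, φ₀ + h satisfies the steady-state HJB equation with the modified state cost m₀ + m̄ + (1/4)·‖R⁻¹gᵀ∇h‖²_R.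 -/
open Matrix

/-- Euclidean gradient of a scalar function on `Fin n → ℝ`:
the vector of partial derivatives. -/
noncomputable def grad {n : ℕ} (φ : (Fin n → ℝ) → ℝ) (x : Fin n → ℝ) : Fin n → ℝ :=
  fun i => fderiv ℝ φ x (Pi.single i 1)

/-- `R`-weighted squared norm `‖u‖²_R = u ⬝ᵥ R.mulVec u`. -/
def sqR {p : ℕ} (R : Matrix (Fin p) (Fin p) ℝ) (u : Fin p → ℝ) : ℝ :=
  u ⬝ᵥ R.mulVec u

/-! Expanding the quadratic Hamiltonian at `∇φ₀ + ∇h` gives the Hamiltonian at `∇φ₀`, the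
cross term `∇h ⬝ᵥ (f - ½ g R⁻¹ gᵀ ∇φ₀)` (which the linear PDE replaces by `-m̄`) and the
quadratic term `-¼ (gᵀ∇h)ᵀ R⁻¹ (gᵀ∇h) = -¼ ‖R⁻¹ gᵀ ∇h‖²_R`. -/

namespace Matrix

variable {ι κ α : Type*} [Fintype ι] [Fintype κ]

-- For singular `A` both sides are the junk value `A⁻¹ = 0`.
theorem nonsing_inv_mul_mul_nonsing_inv [DecidableEq ι] [CommRing α] (A : Matrix ι ι α) :
    A⁻¹ * A * A⁻¹ = A⁻¹ := by
  by_cases hA : IsUnit A.det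
  · rw [nonsing_inv_mul A hA, Matrix.one_mul]
  · rw [nonsing_inv_apply_not_isUnit A hA, Matrix.zero_mul, Matrix.zero_mul]

theorem IsSymm.dotProduct_mulVec_comm [CommSemiring α] {S : Matrix ι ι α} (hS : S.IsSymm)
    (u v : ι → α) : u ⬝ᵥ S *ᵥ v = v ⬝ᵥ S *ᵥ u := by
  rw [dotProduct_mulVec, ← mulVec_transpose, hS.eq, dotProduct_comm]

theorem IsSymm.nonsing_inv_mulVec_dotProduct_mulVec [DecidableEq ι] [CommRing α]
    {A : Matrix ι ι α} (hA : A.IsSymm) (b : ι → α) :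
    A⁻¹ *ᵥ b ⬝ᵥ A *ᵥ (A⁻¹ *ᵥ b) = b ⬝ᵥ A⁻¹ *ᵥ b := by
  rw [mulVec_mulVec, dotProduct_comm, hA.inv.dotProduct_mulVec_comm, mulVec_mulVec,
    ← Matrix.mul_assoc, nonsing_inv_mul_mul_nonsing_inv]

theorem IsSymm.dotProduct_sub_quadratic_add [Field α] {S : Matrix κ κ α} (hS : S.IsSymm)
    (G : Matrix ι κ α) (F p q : ι → α) :
    (p + q) ⬝ᵥ F - (1/4) * (Gᵀ *ᵥ (p + q) ⬝ᵥ S *ᵥ (Gᵀ *ᵥ (p + q)))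
      = (p ⬝ᵥ F - (1/4) * (Gᵀ *ᵥ p ⬝ᵥ S *ᵥ (Gᵀ *ᵥ p)))
        + q ⬝ᵥ (F - (1/2 : α) • G *ᵥ (S *ᵥ (Gᵀ *ᵥ p)))
        - (1/4) * (Gᵀ *ᵥ q ⬝ᵥ S *ᵥ (Gᵀ *ᵥ q)) := by
  have hcross : q ⬝ᵥ G *ᵥ (S *ᵥ (Gᵀ *ᵥ p)) = Gᵀ *ᵥ p ⬝ᵥ S *ᵥ (Gᵀ *ᵥ q) := by
    rw [dotProduct_mulVec, ← mulVec_transpose, hS.dotProduct_mulVec_comm]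
  simp only [mulVec_add, add_dotProduct, dotProduct_add, dotProduct_sub, dotProduct_smul,
    smul_eq_mul, hcross, hS.dotProduct_mulVec_comm (Gᵀ *ᵥ q)]
  -- In characteristic 2 both sides are `0`.
  have h42 : (4 : α)⁻¹ * 2 = 2⁻¹ := by
    rw [show (4 : α) = 2 * 2 by norm_num, mul_inv, mul_right_comm]
    simpa using mul_inv_mul_cancel (2⁻¹ : α)
  linear_combination (-(Gᵀ *ᵥ p ⬝ᵥ S *ᵥ (Gᵀ *ᵥ q))) * h42

end Matrix

theorem grad_add {n : ℕ} {φ ψ : (Fin n → ℝ) → ℝ} {x : Fin n → ℝ}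
    (hφ : DifferentiableAt ℝ φ x) (hψ : DifferentiableAt ℝ ψ x) :
    grad (φ + ψ) x = grad φ x + grad ψ x := by
  funext i
  simp only [grad, fderiv_add hφ hψ, _root_.add_apply, Pi.add_apply]

theorem sqR_nonsing_inv_mulVec {p : ℕ} {R : Matrix (Fin p) (Fin p) ℝ} (hR : R.IsSymm)
    (b : Fin p → ℝ) : sqR R (R⁻¹ *ᵥ b) = b ⬝ᵥ R⁻¹ *ᵥ b :=
  hR.nonsing_inv_mulVec_dotProduct_mulVec b

theorem stmt_0_general {n p : ℕ}
    (f : (Fin n → ℝ) → (Fin n → ℝ))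
    (g : (Fin n → ℝ) → Matrix (Fin n) (Fin p) ℝ)
    (R : Matrix (Fin p) (Fin p) ℝ)
    (hRsymm : R.IsSymm)
    (m₀ mbar : (Fin n → ℝ) → ℝ)
    (φ₀ h : (Fin n → ℝ) → ℝ)
    (hφ₀ : Differentiable ℝ φ₀) (hh : Differentiable ℝ h)
    (hHJB : ∀ x, grad φ₀ x ⬝ᵥ f x
        - (1/4) * ((g x)ᵀ.mulVec (grad φ₀ x) ⬝ᵥ R⁻¹.mulVec ((g x)ᵀ.mulVec (grad φ₀ x)))
        + m₀ x = 0)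
    (hPDE : ∀ x, grad h x ⬝ᵥ
        (f x - (1/2 : ℝ) • (g x).mulVec (R⁻¹.mulVec ((g x)ᵀ.mulVec (grad φ₀ x)))) = - mbar x) :
    ∀ x, grad (φ₀ + h) x ⬝ᵥ f x
        - (1/4) * ((g x)ᵀ.mulVec (grad (φ₀ + h) x) ⬝ᵥ
            R⁻¹.mulVec ((g x)ᵀ.mulVec (grad (φ₀ + h) x)))
        = -(m₀ x + mbar x
            + (1/4) * sqR R (R⁻¹.mulVec ((g x)ᵀ.mulVec (grad h x)))) := by
  intro x
  rw [grad_add (hφ₀ x) (hh x), hRsymm.inv.dotProduct_sub_quadratic_add, hPDE x,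
    sqR_nonsing_inv_mulVec hRsymm]
  linarith [hHJB x]

theorem stmt_0 {n p : ℕ}
    (f : (Fin n → ℝ) → (Fin n → ℝ))
    (g : (Fin n → ℝ) → Matrix (Fin n) (Fin p) ℝ)
    (R : Matrix (Fin p) (Fin p) ℝ)
    (hRsymm : R.IsSymm) (hRpd : R.PosDef)
    (m₀ mbar : (Fin n → ℝ) → ℝ)
    (φ₀ h : (Fin n → ℝ) → ℝ)
    (hφ₀ : Differentiable ℝ φ₀) (hh : Differentiable ℝ h)
    (hHJB : ∀ x, grad φ₀ x ⬝ᵥ f x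
        - (1/4) * ((g x)ᵀ.mulVec (grad φ₀ x) ⬝ᵥ R⁻¹.mulVec ((g x)ᵀ.mulVec (grad φ₀ x)))
        + m₀ x = 0)
    (hPDE : ∀ x, grad h x ⬝ᵥ
        (f x - (1/2 : ℝ) • (g x).mulVec (R⁻¹.mulVec ((g x)ᵀ.mulVec (grad φ₀ x)))) = - mbar x) :
    ∀ x, grad (φ₀ + h) x ⬝ᵥ f x
        - (1/4) * ((g x)ᵀ.mulVec (grad (φ₀ + h) x) ⬝ᵥ
            R⁻¹.mulVec ((g x)ᵀ.mulVec (grad (φ₀ + h) x)))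
        = -(m₀ x + mbar x
            + (1/4) * sqR R (R⁻¹.mulVec ((g x)ᵀ.mulVec (grad h x)))) :=
  stmt_0_general f g R hRsymm m₀ mbar φ₀ h hφ₀ hh hHJB hPDE
end

section
/- Suppose φ̄ : (Fin n → ℝ) → ℝ is differentiable and satisfies the steady-state HJB equation with state cost m, i.e. for all x: ∇φ̄(x) ⬝ᵥ f(x) − (1/4)·((g x)ᵀ.mulVec (∇φ̄ x)) ⬝ᵥ (R⁻¹.mulVec ((g x)ᵀ.mulVec (∇φ̄ x))) + m(x) = 0. Let u : ℝ → (Fin p → ℝ) be any control signal and let x : ℝ → (Fin n → ℝ) be differentiable with x'(t) = f(x(t)) + (g (x t)).mulVec (u t) for all t. Then for every t, the composite t ↦ φ̄(x(t)) has derivative at t equal to ‖u(t) + (1/2)·R⁻¹.mulVec ((g (x t))ᵀ.mulVec (∇φ̄ (x t)))‖²_R − ‖u(t)‖²_R − m(x(t)). -/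
open Matrix

lemma fderiv_eq_dot {n : ℕ} (φ : (Fin n → ℝ) → ℝ) (x v : Fin n → ℝ) :
    fderiv ℝ φ x v = grad φ x ⬝ᵥ v := by
  have hv : v = ∑ i, v i • (Pi.single i 1 : Fin n → ℝ) := by
    funext j
    simp [Pi.single_apply, Finset.sum_apply]
  conv_lhs => rw [hv]
  rw [map_sum]
  simp [grad, dotProduct, mul_comm]

theorem stmt_3 {n p : ℕ}
    (f : (Fin n → ℝ) → (Fin n → ℝ))
    (g : (Fin n → ℝ) → Matrix (Fin n) (Fin p) ℝ)
    (R : Matrix (Fin p) (Fin p) ℝ)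
    (hRsymm : R.IsSymm) (hRpd : R.PosDef)
    (m : (Fin n → ℝ) → ℝ)
    (φb : (Fin n → ℝ) → ℝ)
    (hφ : Differentiable ℝ φb)
    (hHJB : ∀ x, grad φb x ⬝ᵥ f x
        - (1/4) * ((g x)ᵀ.mulVec (grad φb x) ⬝ᵥ R⁻¹.mulVec ((g x)ᵀ.mulVec (grad φb x)))
        + m x = 0)
    (u : ℝ → (Fin p → ℝ))
    (x : ℝ → (Fin n → ℝ))
    (hx : ∀ t, HasDerivAt x (f (x t) + (g (x t)).mulVec (u t)) t) :
    ∀ t, HasDerivAt (fun s => φb (x s))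
      (sqR R (u t + (1/2 : ℝ) • R⁻¹.mulVec ((g (x t))ᵀ.mulVec (grad φb (x t))))
        - sqR R (u t) - m (x t)) t := by
  intro t
  have key : HasDerivAt (fun s => φb (x s))
      (fderiv ℝ φb (x t) (f (x t) + (g (x t)).mulVec (u t))) t :=
    (hφ.differentiableAt.hasFDerivAt).comp_hasDerivAt t (hx t)
  convert key using 1
  set G := grad φb (x t) with hG
  set a := (g (x t))ᵀ.mulVec G with ha
  set w := R⁻¹.mulVec a with hwdef
  have hR1 : R * R⁻¹ = 1 :=
    Matrix.mul_nonsing_inv R (isUnit_iff_ne_zero.mpr hRpd.det_pos.ne')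
  have hw : R.mulVec w = a := by
    rw [hwdef, Matrix.mulVec_mulVec, hR1, Matrix.one_mulVec]
  -- symmetric pairing
  have hsym : ∀ y z : Fin p → ℝ, y ⬝ᵥ R.mulVec z = R.mulVec y ⬝ᵥ z := by
    intro y z
    rw [Matrix.dotProduct_mulVec, ← Matrix.mulVec_transpose, hRsymm.eq]
  have hHJB' : G ⬝ᵥ f (x t) = (1/4) * (a ⬝ᵥ w) - m (x t) := by
    have := hHJB (x t)
    rw [← hG, ← ha, ← hwdef] at this
    linarith
  have hGgu : G ⬝ᵥ (g (x t)).mulVec (u t) = a ⬝ᵥ u t := by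
    rw [Matrix.dotProduct_mulVec, ← Matrix.mulVec_transpose, ha]
  rw [fderiv_eq_dot, dotProduct_add, hHJB', hGgu]
  have expand : sqR R (u t + (1/2 : ℝ) • w)
      = sqR R (u t) + a ⬝ᵥ u t + (1/4) * (a ⬝ᵥ w) := by
    simp only [sqR, Matrix.mulVec_add, Matrix.mulVec_smul, dotProduct_add,
      add_dotProduct, dotProduct_smul, smul_dotProduct]
    have h1 : u t ⬝ᵥ R.mulVec w = a ⬝ᵥ u t := by
      rw [dotProduct_comm, hw]
    have h2 : w ⬝ᵥ R.mulVec (u t) = a ⬝ᵥ u t := by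
      rw [hsym, hw]
    have h3 : w ⬝ᵥ R.mulVec w = a ⬝ᵥ w := by
      rw [hsym, hw]
    rw [h1, h2, h3]
    have h4 : a ⬝ᵥ w = w ⬝ᵥ a := dotProduct_comm _ _
    simp [smul_eq_mul]
    ring
  rw [expand]
  ring
end

section
/- Suppose φ̄ : (Fin n → ℝ) → ℝ is continuously differentiable and satisfies the steady-state HJB equation with state cost m (continuous), i.e. for all x: ∇φ̄(x) ⬝ᵥ f(x) − (1/4)·((g x)ᵀ.mulVec (∇φ̄ x)) ⬝ᵥ (R⁻¹.mulVec ((g x)ᵀ.mulVec (∇φ̄ x))) + m(x) = 0. Let u : ℝ → (Fin p → ℝ) be continuous, let g be continuous, and let x : ℝ → (Fin n → ℝ) be continuously differentiable with x'(t) = f(x(t)) + (g (x t)).mulVec (u t) for all t. Then for every T ≥ 0, the finite-horizon cost decomposes as ∫₀ᵀ (‖u(t)‖²_R + m(x(t))) dt = ∫₀ᵀ ‖u(t) + (1/2)·R⁻¹.mulVec ((g (x t))ᵀ.mulVec (∇φ̄ (x t)))‖²_R dt + φ̄(x(0)) − φ̄(x(T)). -/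
/-!
Along any trajectory, the chain rule and the identity `∇φ̄ ⬝ g u = u ⬝ gᵀ∇φ̄` give
`d/dt φ̄(x) = ∇φ̄ ⬝ f + u ⬝ gᵀ∇φ̄`. Completing the square in `R` and substituting the HJB
equation for `∇φ̄ ⬝ f` turns the integrand `‖u + ½R⁻¹gᵀ∇φ̄‖²_R` into
`‖u‖²_R + m(x) + d/dt φ̄(x)`; integrating and applying the fundamental theorem of calculus
to the `C¹` function `φ̄ ∘ x` gives the decomposition.
-/

open Matrix

theorem fderiv_apply_eq_grad_dotProduct {n : ℕ} (φ : (Fin n → ℝ) → ℝ) (y w : Fin n → ℝ) :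
    fderiv ℝ φ y w = grad φ y ⬝ᵥ w := by
  conv_lhs => rw [← Finset.univ_sum_single w]
  simp only [map_sum, grad, dotProduct]
  refine Finset.sum_congr rfl fun i _ => ?_
  rw [← mul_one (w i), ← smul_eq_mul, Pi.single_smul', map_smul, smul_eq_mul, smul_eq_mul,
    mul_one, mul_comm]

theorem Matrix.IsSymm.dotProduct_mulVec_comm_s4 {ι α : Type*} [Fintype ι] [CommSemiring α]
    {A : Matrix ι ι α} (hA : A.IsSymm) (a b : ι → α) : a ⬝ᵥ A *ᵥ b = b ⬝ᵥ A *ᵥ a := by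
  rw [dotProduct_mulVec, ← mulVec_transpose, hA.eq, dotProduct_comm]

theorem sqR_add_half_inv_mulVec {p : ℕ} {R : Matrix (Fin p) (Fin p) ℝ} (hR : R.IsSymm)
    (hdet : IsUnit R.det) (a v : Fin p → ℝ) :
    sqR R (a + (1 / 2 : ℝ) • R⁻¹ *ᵥ v) = sqR R a + a ⬝ᵥ v + 1 / 4 * (v ⬝ᵥ R⁻¹ *ᵥ v) := by
  set b := (1 / 2 : ℝ) • R⁻¹ *ᵥ v
  have hRb : R *ᵥ b = (1 / 2 : ℝ) • v := by
    rw [mulVec_smul, mulVec_mulVec, mul_nonsing_inv R hdet, one_mulVec]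
  rw [sqR, mulVec_add, add_dotProduct, dotProduct_add, dotProduct_add,
    hR.dotProduct_mulVec_comm_s4 b a, hRb, ← sqR]
  simp only [b, dotProduct_smul, smul_dotProduct, smul_eq_mul, dotProduct_comm (R⁻¹ *ᵥ v) v]
  ring

theorem sqR_add_feedback_of_hjb {n p : ℕ} {R : Matrix (Fin p) (Fin p) ℝ} (hR : R.IsSymm)
    (hdet : IsUnit R.det) {ξ F : Fin n → ℝ} {G : Matrix (Fin n) (Fin p) ℝ} {c : ℝ}
    (hHJB : ξ ⬝ᵥ F - 1 / 4 * (Gᵀ *ᵥ ξ ⬝ᵥ R⁻¹ *ᵥ (Gᵀ *ᵥ ξ)) + c = 0) (w : Fin p → ℝ) :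
    sqR R (w + (1 / 2 : ℝ) • R⁻¹ *ᵥ (Gᵀ *ᵥ ξ)) = sqR R w + c + ξ ⬝ᵥ (F + G *ᵥ w) := by
  have hGw : w ⬝ᵥ Gᵀ *ᵥ ξ = ξ ⬝ᵥ G *ᵥ w := by
    rw [mulVec_transpose, dotProduct_comm, dotProduct_mulVec]
  rw [sqR_add_half_inv_mulVec hR hdet, dotProduct_add, hGw]
  linarith

theorem stmt_4_general {n p : ℕ}
    (f : (Fin n → ℝ) → (Fin n → ℝ))
    (g : (Fin n → ℝ) → Matrix (Fin n) (Fin p) ℝ)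
    (R : Matrix (Fin p) (Fin p) ℝ)
    (hRsymm : R.IsSymm) (hRpd : R.PosDef)
    (m : (Fin n → ℝ) → ℝ) (hm : Continuous m)
    (φb : (Fin n → ℝ) → ℝ)
    (hφ : ContDiff ℝ 1 φb)
    (hHJB : ∀ x, grad φb x ⬝ᵥ f x
        - (1/4) * ((g x)ᵀ.mulVec (grad φb x) ⬝ᵥ R⁻¹.mulVec ((g x)ᵀ.mulVec (grad φb x)))
        + m x = 0)
    (u : ℝ → (Fin p → ℝ)) (hu : Continuous u)
    (x : ℝ → (Fin n → ℝ)) (hxC1 : ContDiff ℝ 1 x)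
    (hx : ∀ t, HasDerivAt x (f (x t) + (g (x t)).mulVec (u t)) t) :
    ∀ T : ℝ, 0 ≤ T →
      (∫ t in (0:ℝ)..T, (sqR R (u t) + m (x t)))
        = (∫ t in (0:ℝ)..T,
            sqR R (u t + (1/2 : ℝ) • R⁻¹.mulVec ((g (x t))ᵀ.mulVec (grad φb (x t)))))
          + φb (x 0) - φb (x T) := by
  intro T _
  have hdet : IsUnit R.det := isUnit_iff_ne_zero.mpr hRpd.det_pos.ne'
  have hφx : ContDiff ℝ 1 (φb ∘ x) := hφ.comp hxC1
  have hderiv (t : ℝ) : deriv (φb ∘ x) t = grad φb (x t) ⬝ᵥ (f (x t) + g (x t) *ᵥ u t) := by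
    rw [← fderiv_apply_eq_grad_dotProduct]
    exact ((hφ.differentiable one_ne_zero (x t)).hasFDerivAt.comp_hasDerivAt t (hx t)).deriv
  have hFTC : ∫ t in (0:ℝ)..T, deriv (φb ∘ x) t = φb (x T) - φb (x 0) :=
    intervalIntegral.integral_deriv_eq_sub (fun t _ => hφx.differentiable one_ne_zero t)
      ((hφx.continuous_deriv le_rfl).intervalIntegrable _ _)
  have hcost : Continuous fun t => sqR R (u t) + m (x t) :=
    (hu.dotProduct (continuous_const.matrix_mulVec hu)).add (hm.comp hxC1.continuous)
  have hintegrand (t : ℝ) :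
      sqR R (u t + (1/2 : ℝ) • R⁻¹ *ᵥ ((g (x t))ᵀ *ᵥ grad φb (x t)))
        = (sqR R (u t) + m (x t)) + deriv (φb ∘ x) t := by
    rw [hderiv, sqR_add_feedback_of_hjb hRsymm hdet (hHJB (x t)), add_assoc]
  rw [intervalIntegral.integral_congr fun t _ => hintegrand t,
    intervalIntegral.integral_add (hcost.intervalIntegrable _ _)
      ((hφx.continuous_deriv le_rfl).intervalIntegrable _ _), hFTC]
  ring

theorem stmt_4 {n p : ℕ}
    (f : (Fin n → ℝ) → (Fin n → ℝ))
    (g : (Fin n → ℝ) → Matrix (Fin n) (Fin p) ℝ)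
    (hg : Continuous g)
    (R : Matrix (Fin p) (Fin p) ℝ)
    (hRsymm : R.IsSymm) (hRpd : R.PosDef)
    (m : (Fin n → ℝ) → ℝ) (hm : Continuous m)
    (φb : (Fin n → ℝ) → ℝ)
    (hφ : ContDiff ℝ 1 φb)
    (hHJB : ∀ x, grad φb x ⬝ᵥ f x
        - (1/4) * ((g x)ᵀ.mulVec (grad φb x) ⬝ᵥ R⁻¹.mulVec ((g x)ᵀ.mulVec (grad φb x)))
        + m x = 0)
    (u : ℝ → (Fin p → ℝ)) (hu : Continuous u)
    (x : ℝ → (Fin n → ℝ)) (hxC1 : ContDiff ℝ 1 x)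
    (hx : ∀ t, HasDerivAt x (f (x t) + (g (x t)).mulVec (u t)) t) :
    ∀ T : ℝ, 0 ≤ T →
      (∫ t in (0:ℝ)..T, (sqR R (u t) + m (x t)))
        = (∫ t in (0:ℝ)..T,
            sqR R (u t + (1/2 : ℝ) • R⁻¹.mulVec ((g (x t))ᵀ.mulVec (grad φb (x t)))))
          + φb (x 0) - φb (x T) :=
  stmt_4_general f g R hRsymm hRpd m hm φb hφ hHJB u hu x hxC1 hx
end

section
/- Suppose φ̄ : (Fin n → ℝ) → ℝ is differentiable and satisfies the steady-state HJB equation with state cost m, i.e. for all x: ∇φ̄(x) ⬝ᵥ f(x) − (1/4)·((g x)ᵀ.mulVec (∇φ̄ x)) ⬝ᵥ (R⁻¹.mulVec ((g x)ᵀ.mulVec (∇φ̄ x))) + m(x) = 0. Let v : ℝ → (Fin p → ℝ) be an external input and let x : ℝ → (Fin n → ℝ) be differentiable and solve the perturbed closed loop x'(t) = f(x(t)) − (1/2)·(g (x t)).mulVec (R⁻¹.mulVec ((g (x t))ᵀ.mulVec (∇φ̄ (x t)))) + (g (x t)).mulVec (v t) for all t. Then for every t, the composite t ↦ φ̄(x(t))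 has derivative at t equal to −m(x(t)) − ‖(1/2)·R⁻¹.mulVec ((g (x t))ᵀ.mulVec (∇φ̄ (x t))) − v(t)‖²_R + ‖v(t)‖²_R. -/
open Matrix

lemma clm_eq_grad {n : ℕ} (φ : (Fin n → ℝ) → ℝ) (y z : Fin n → ℝ) :
    fderiv ℝ φ y z = (fun i => fderiv ℝ φ y (Pi.single i (1:ℝ))) ⬝ᵥ z := by
  have hz : z = ∑ i, z i • (Pi.single i (1:ℝ) : Fin n → ℝ) := by
    funext j
    simp [Pi.single_apply, Finset.sum_apply]
  conv_lhs => rw [hz]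
  simp [map_sum, dotProduct, mul_comm]

theorem stmt_11 {n p : ℕ}
    (f : (Fin n → ℝ) → (Fin n → ℝ))
    (g : (Fin n → ℝ) → Matrix (Fin n) (Fin p) ℝ)
    (R : Matrix (Fin p) (Fin p) ℝ)
    (hRsymm : R.IsSymm) (hRpd : R.PosDef)
    (m : (Fin n → ℝ) → ℝ)
    (φb : (Fin n → ℝ) → ℝ)
    (hφ : Differentiable ℝ φb)
    (hHJB : ∀ x, grad φb x ⬝ᵥ f x
        - (1/4) * ((g x)ᵀ.mulVec (grad φb x) ⬝ᵥ R⁻¹.mulVec ((g x)ᵀ.mulVec (grad φb x)))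
        + m x = 0)
    (v : ℝ → (Fin p → ℝ))
    (x : ℝ → (Fin n → ℝ))
    (hx : ∀ t, HasDerivAt x
      (f (x t) - (1/2 : ℝ) • (g (x t)).mulVec (R⁻¹.mulVec ((g (x t))ᵀ.mulVec (grad φb (x t))))
        + (g (x t)).mulVec (v t)) t) :
    ∀ t, HasDerivAt (fun s => φb (x s))
      (-(m (x t))
        - sqR R ((1/2 : ℝ) • R⁻¹.mulVec ((g (x t))ᵀ.mulVec (grad φb (x t))) - v t)
        + sqR R (v t)) t := by
  intro t
  have hRinv : R * R⁻¹ = 1 := Matrix.mul_nonsing_inv R hRpd.det_pos.ne'.isUnit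
  have key : ∀ z, R.mulVec (R⁻¹.mulVec z) = z := by
    intro z; rw [Matrix.mulVec_mulVec, hRinv, Matrix.one_mulVec]
  have hsym : ∀ u w : Fin p → ℝ, u ⬝ᵥ R.mulVec w = R.mulVec u ⬝ᵥ w := by
    intro u w
    rw [Matrix.dotProduct_mulVec, ← Matrix.mulVec_transpose, hRsymm.eq]
  set y := x t with hy
  set w := grad φb y with hw
  set G := g y with hG
  set a := Gᵀ.mulVec w with ha
  set V := v t with hV
  have hdotG : ∀ z : Fin p → ℝ, w ⬝ᵥ G.mulVec z = a ⬝ᵥ z := by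
    intro z
    rw [Matrix.dotProduct_mulVec, ← Matrix.mulVec_transpose]
  have hd := (hφ y).hasFDerivAt.comp_hasDerivAt t (hx t)
  have heq : (fderiv ℝ φb y)
      (f y - (1/2 : ℝ) • G.mulVec (R⁻¹.mulVec a) + G.mulVec V)
      = -(m y) - sqR R ((1/2 : ℝ) • R⁻¹.mulVec a - V) + sqR R V := by
    rw [clm_eq_grad]
    have hwdef : (fun i => fderiv ℝ φb y (Pi.single i (1:ℝ))) = w := rfl
    rw [hwdef]
    have hHJ := hHJB y
    rw [← hw, ← hG, ← ha] at hHJ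
    have e1 : w ⬝ᵥ (f y - (1/2 : ℝ) • G.mulVec (R⁻¹.mulVec a) + G.mulVec V)
        = w ⬝ᵥ f y - (1/2) * (a ⬝ᵥ R⁻¹.mulVec a) + a ⬝ᵥ V := by
      rw [dotProduct_add, dotProduct_sub, dotProduct_smul, hdotG, hdotG]
      simp only [smul_eq_mul]
    have e2 : sqR R ((1/2 : ℝ) • R⁻¹.mulVec a - V)
        = (1/4) * (a ⬝ᵥ R⁻¹.mulVec a) - a ⬝ᵥ V + sqR R V := by
      unfold sqR
      have h3 : R⁻¹.mulVec a ⬝ᵥ R.mulVec V = a ⬝ᵥ V := by rw [hsym, key]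
      rw [Matrix.mulVec_sub, Matrix.mulVec_smul, key]
      simp only [sub_dotProduct, dotProduct_sub, smul_dotProduct, dotProduct_smul,
        h3, smul_eq_mul, dotProduct_comm (R⁻¹.mulVec a) a,
        dotProduct_comm V a]
      ring
    rw [e1, e2]
    linarith
  rw [heq] at hd
  exact hd
end

section
/- Suppose φ̄ : (Fin n → ℝ) → ℝ is differentiable, m(y) ≥ 0 for all y, and φ̄ satisfies the steady-state HJB equation with state cost m, i.e. for all x: ∇φ̄(x) ⬝ᵥ f(x) − (1/4)·((g x)ᵀ.mulVec (∇φ̄ x)) ⬝ᵥ (R⁻¹.mulVec ((g x)ᵀ.mulVec (∇φ̄ x))) + m(x) = 0. Let x : ℝ → (Fin n → ℝ) be differentiable and solve the optimal closed loop x'(t) = f(x(t)) − (1/2)·(g (x t)).mulVec (R⁻¹.mulVec ((g (x t))ᵀ.mulVec (∇φ̄ (x t)))) for all t. Then the function t ↦ φ̄(x(t)) is antitone (monotonically nonincreasing) on ℝ: for all s ≤ t, φ̄(x(t)) ≤ φ̄(x(s)). -/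
open Matrix

lemma fderiv_eq_grad_dot {n : ℕ} (φ : (Fin n → ℝ) → ℝ) (y v : Fin n → ℝ) :
    fderiv ℝ φ y v = grad φ y ⬝ᵥ v := by
  have hv : v = ∑ i, v i • (Pi.single i 1 : Fin n → ℝ) := by
    ext j
    simp [Finset.sum_apply, Pi.single_apply, mul_comm]
  conv_lhs => rw [hv]
  rw [map_sum]
  simp only [_root_.map_smul]
  simp [grad, dotProduct, mul_comm]

theorem stmt_15 {n p : ℕ}
    (f : (Fin n → ℝ) → (Fin n → ℝ))
    (g : (Fin n → ℝ) → Matrix (Fin n) (Fin p) ℝ)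
    (R : Matrix (Fin p) (Fin p) ℝ)
    (hRsymm : R.IsSymm) (hRpd : R.PosDef)
    (m : (Fin n → ℝ) → ℝ) (hm : ∀ y, 0 ≤ m y)
    (φb : (Fin n → ℝ) → ℝ)
    (hφ : Differentiable ℝ φb)
    (hHJB : ∀ x, grad φb x ⬝ᵥ f x
        - (1/4) * ((g x)ᵀ.mulVec (grad φb x) ⬝ᵥ R⁻¹.mulVec ((g x)ᵀ.mulVec (grad φb x)))
        + m x = 0)
    (x : ℝ → (Fin n → ℝ))
    (hx : ∀ t, HasDerivAt x
      (f (x t) - (1/2 : ℝ) • (g (x t)).mulVec (R⁻¹.mulVec ((g (x t))ᵀ.mulVec (grad φb (x t))))) t) :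
    Antitone (fun t => φb (x t)) := by
  have hderiv : ∀ t, HasDerivAt (fun t => φb (x t))
      (fderiv ℝ φb (x t)
        (f (x t) - (1/2 : ℝ) • (g (x t)).mulVec (R⁻¹.mulVec ((g (x t))ᵀ.mulVec (grad φb (x t)))))) t :=
    fun t => (hφ (x t)).hasFDerivAt.comp_hasDerivAt t (hx t)
  apply antitone_of_deriv_nonpos
  · exact fun t => (hderiv t).differentiableAt
  · intro t
    rw [(hderiv t).deriv]
    set G := grad φb (x t)
    set w := (g (x t))ᵀ.mulVec G with hw
    have hkey : fderiv ℝ φb (x t)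
        (f (x t) - (1/2 : ℝ) • (g (x t)).mulVec (R⁻¹.mulVec w))
        = G ⬝ᵥ f (x t) - (1/2) * (w ⬝ᵥ R⁻¹.mulVec w) := by
      rw [fderiv_eq_grad_dot, dotProduct_sub, dotProduct_smul]
      have : G ⬝ᵥ (g (x t)).mulVec (R⁻¹.mulVec w) = w ⬝ᵥ R⁻¹.mulVec w := by
        rw [Matrix.dotProduct_mulVec, ← Matrix.mulVec_transpose]
      rw [this, smul_eq_mul]
    rw [hkey]
    have hHJB' := hHJB (x t)
    have hq : (0:ℝ) ≤ w ⬝ᵥ R⁻¹.mulVec w := by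
      have := hRpd.inv.posSemidef.re_dotProduct_nonneg w
      simpa using this
    have hGf : G ⬝ᵥ f (x t) = (1/4) * (w ⬝ᵥ R⁻¹.mulVec w) - m (x t) := by
      linarith [hHJB']
    rw [hGf]
    nlinarith [hm (x t), hq]
end
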